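/- arXiv:2202.13192 — 6 statements merged into one kernel-verified Lean document; each statement's English description precedes it below -/
import Mathlib

section
/- Let K be a field, G a finite group, and (V,Q) a metabolic equivariant quadratic KG-module (i.e., there exists a KG-submodule N with N = N^⊥ and Q(N) = 0, where ⊥ is taken with respect to the polarization B_Q). If U ≤ V is any KG-submodule with Q(U) = 0, then there exists a KG-submodule M of V containing U with M = M^⊥ and Q(M) = 0. -/
open QuadraticMap

variable {K : Type*} [Field K] {G : Type*} [Group G]
variable {V W : Type*} [AddCommGroup V] [Module K V] [AddCommGroup W] [Module K W]

/-- `U` is a `KG`-submodule, i.e. invariant under the representation `ρ`. -/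
def IsSubrep (ρ : Representation K G V) (U : Submodule K V) : Prop :=
  ∀ g : G, ∀ v ∈ U, ρ g v ∈ U

/-- The quadratic form `Q` is `G`-invariant. -/
def GInvariantQF (ρ : Representation K G V) (Q : QuadraticForm K V) : Prop :=
  ∀ g v, Q (ρ g v) = Q v

/-- Orthogonal complement of a submodule with respect to the polarization of `Q`. -/
def qperp (Q : QuadraticForm K V) (U : Submodule K V) : Submodule K V :=
  LinearMap.BilinForm.orthogonal Q.polarBilin U

/-- `Q` is non-degenerate: the radical of its polarization is zero. -/
def QNondeg (Q : QuadraticForm K V) : Prop :=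
  LinearMap.BilinForm.Nondegenerate Q.polarBilin

/-- `(V, Q)` is metabolic: there is a `KG`-submodule `N` with `N = N^⊥` and `Q(N) = 0`. -/
def Metabolic (ρ : Representation K G V) (Q : QuadraticForm K V) : Prop :=
  ∃ N : Submodule K V, IsSubrep ρ N ∧ N = qperp Q N ∧ ∀ v ∈ N, Q v = 0

/-- `(V, Q)` is anisotropic: `Q` does not vanish on any non-zero `KG`-submodule. -/
def AnisotropicRep (ρ : Representation K G V) (Q : QuadraticForm K V) : Prop :=
  ∀ U : Submodule K V, IsSubrep ρ U → (∀ v ∈ U, Q v = 0) → U = ⊥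

/-- The product (orthogonal direct sum) of two representations. -/
def prodRep (ρ : Representation K G V) (σ : Representation K G W) :
    Representation K G (V × W) :=
  ⟨⟨fun g => (ρ g).prodMap (σ g), by ext v <;> simp⟩, fun g h => by ext v <;> simp⟩

/-- `V` is a simple `KG`-module. -/
def SimpleRep (ρ : Representation K G V) : Prop :=
  Nontrivial V ∧ ∀ U : Submodule K V, IsSubrep ρ U → U = ⊥ ∨ U = ⊤

/-- `V` is a self-dual `KG`-module. -/
def SelfDualRep (ρ : Representation K G V) : Prop :=
  ∃ f : V ≃ₗ[K] Module.Dual K V, ∀ g v, f (ρ g v) = ρ.dual g (f v)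

/-!
Take a Lagrangian `N` and an isotropic `U`, and set `M = U + (N ∩ U^⊥)`. Both summands are
isotropic and orthogonal to each other, so `M` is isotropic, and it is a `KG`-submodule because
`U^⊥` is. Using `(N + U^⊥)^⊥ = N ∩ U` and `dim S + dim S^⊥ = dim V`, the dimension count gives
`dim M = dim N = dim V / 2`, so the inclusion `M ≤ M^⊥` is an equality.
-/

open LinearMap.BilinForm Module Submodule

namespace LinearMap.BilinForm

theorem orthogonal_sup {R M : Type*} [CommRing R] [AddCommGroup M] [Module R M]
    (B : LinearMap.BilinForm R M) (N L : Submodule R M) :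
    B.orthogonal (N ⊔ L) = B.orthogonal N ⊓ B.orthogonal L := by
  refine le_antisymm (le_inf (orthogonal_le le_sup_left) (orthogonal_le le_sup_right)) ?_
  rintro x ⟨hN, hL⟩ y hy
  obtain ⟨a, ha, b, hb, rfl⟩ := mem_sup.1 hy
  rw [map_add, LinearMap.add_apply, hN a ha, hL b hb, add_zero]

end LinearMap.BilinForm

namespace QuadraticMap

theorem isRefl_polarBilin {R M : Type*} [CommRing R] [AddCommGroup M] [Module R M]
    (Q : QuadraticForm R M) : Q.polarBilin.IsRefl := fun x y h => by
  rwa [polarBilin_apply_apply, polar_comm, ← polarBilin_apply_apply]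

theorem polar_eq_zero_of_isotropic {R M N : Type*} [CommRing R] [AddCommGroup M] [Module R M]
    [AddCommGroup N] [Module R N] {Q : QuadraticMap R M N} {S : Submodule R M}
    (hS : ∀ v ∈ S, Q v = 0) {x y : M} (hx : x ∈ S) (hy : y ∈ S) : polar Q x y = 0 := by
  rw [polar, hS _ (S.add_mem hx hy), hS x hx, hS y hy, sub_zero, sub_zero]

end QuadraticMap

section QuadraticForm

def IsLagrangian (Q : QuadraticForm K V) (M : Submodule K V) : Prop :=
  M = qperp Q M ∧ ∀ v ∈ M, Q v = 0

variable {Q : QuadraticForm K V}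

theorem le_qperp_of_isotropic {S : Submodule K V} (hS : ∀ v ∈ S, Q v = 0) : S ≤ qperp Q S :=
  fun _ hx _ hy => polar_eq_zero_of_isotropic hS hy hx

theorem isotropic_sup {A B : Submodule K V} (hA : ∀ v ∈ A, Q v = 0) (hB : ∀ v ∈ B, Q v = 0)
    (hAB : B ≤ qperp Q A) : ∀ v ∈ A ⊔ B, Q v = 0 := by
  intro v hv
  obtain ⟨a, ha, b, hb, rfl⟩ := mem_sup.1 hv
  have hab : polar Q a b = 0 := hAB hb a ha
  rw [QuadraticMap.map_add Q a b, hA a ha, hB b hb, hab, add_zero, add_zero]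

variable [FiniteDimensional K V]

theorem finrank_add_finrank_qperp (hnd : QNondeg Q) (S : Submodule K V) :
    finrank K S + finrank K (qperp Q S) = finrank K V := by
  have := finrank_add_finrank_orthogonal (isRefl_polarBilin Q) S
  rwa [orthogonal_top_eq_bot hnd, inf_bot_eq, finrank_bot, add_zero] at this

theorem qperp_qperp (hnd : QNondeg Q) (S : Submodule K V) : qperp Q (qperp Q S) = S :=
  orthogonal_orthogonal hnd (isRefl_polarBilin Q) S

theorem two_mul_finrank_of_eq_qperp (hnd : QNondeg Q) {N : Submodule K V}
    (hN : N = qperp Q N) : 2 * finrank K N = finrank K V := by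
  have := finrank_add_finrank_qperp hnd N
  rw [← hN] at this
  omega

theorem eq_qperp_of_le_of_two_mul_finrank (hnd : QNondeg Q) {S : Submodule K V}
    (hle : S ≤ qperp Q S) (hS : 2 * finrank K S = finrank K V) : S = qperp Q S := by
  refine eq_of_le_of_finrank_eq hle ?_
  have := finrank_add_finrank_qperp hnd S
  omega

theorem finrank_sup_inf_qperp (hnd : QNondeg Q) {N U : Submodule K V} (hN : N = qperp Q N)
    (hU : U ≤ qperp Q U) : finrank K ↥(U ⊔ (N ⊓ qperp Q U)) = finrank K N := by
  have hperp_sup : qperp Q (N ⊔ qperp Q U) = N ⊓ U := by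
    rw [qperp, orthogonal_sup, ← qperp, ← qperp, qperp_qperp hnd, ← hN]
  have hinf : U ⊓ (N ⊓ qperp Q U) = N ⊓ U :=
    le_antisymm (le_inf (inf_le_right.trans inf_le_left) inf_le_left)
      (le_inf inf_le_right (le_inf inf_le_left (inf_le_right.trans hU)))
  have hNN := two_mul_finrank_of_eq_qperp hnd hN
  have hUU := finrank_add_finrank_qperp hnd U
  have hsup := finrank_add_finrank_qperp hnd (N ⊔ qperp Q U)
  have hN_Uperp := finrank_sup_add_finrank_inf_eq N (qperp Q U)
  have hM := finrank_sup_add_finrank_inf_eq U (N ⊓ qperp Q U)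
  rw [hperp_sup] at hsup
  rw [hinf] at hM
  omega

theorem isLagrangian_sup_inf_qperp (hnd : QNondeg Q) {N U : Submodule K V}
    (hN : IsLagrangian Q N) (hU0 : ∀ v ∈ U, Q v = 0) : IsLagrangian Q (U ⊔ (N ⊓ qperp Q U)) := by
  have hM0 := isotropic_sup hU0 (fun v hv => hN.2 v (mem_inf.1 hv).1) inf_le_right
  refine ⟨eq_qperp_of_le_of_two_mul_finrank hnd (le_qperp_of_isotropic hM0) ?_, hM0⟩
  rw [finrank_sup_inf_qperp hnd hN.1 (le_qperp_of_isotropic hU0),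
    two_mul_finrank_of_eq_qperp hnd hN.1]

end QuadraticForm

section Representation

variable {ρ : Representation K G V} {Q : QuadraticForm K V}

theorem GInvariantQF.polar_apply (hinv : GInvariantQF ρ Q) (g : G) (v w : V) :
    polar Q (ρ g v) (ρ g w) = polar Q v w := by
  rw [polar, polar, ← map_add, hinv, hinv, hinv]

theorem IsSubrep.sup {A B : Submodule K V} (hA : IsSubrep ρ A) (hB : IsSubrep ρ B) :
    IsSubrep ρ (A ⊔ B) := by
  intro g v hv
  obtain ⟨a, ha, b, hb, rfl⟩ := mem_sup.1 hv
  rw [map_add]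
  exact add_mem_sup (hA g a ha) (hB g b hb)

theorem IsSubrep.inf {A B : Submodule K V} (hA : IsSubrep ρ A) (hB : IsSubrep ρ B) :
    IsSubrep ρ (A ⊓ B) :=
  fun g _ hv => ⟨hA g _ hv.1, hB g _ hv.2⟩

theorem IsSubrep.qperp (hinv : GInvariantQF ρ Q) {S : Submodule K V} (hS : IsSubrep ρ S) :
    IsSubrep ρ (qperp Q S) := by
  intro g v hv u hu
  have hv' : polar Q (ρ g⁻¹ u) v = 0 := hv _ (hS g⁻¹ u hu)
  change polar Q u (ρ g v) = 0
  rwa [← ρ.self_inv_apply g u, hinv.polar_apply]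

end Representation

theorem stmt0_general [FiniteDimensional K V]
    (ρ : Representation K G V) (Q : QuadraticForm K V)
    (hinv : GInvariantQF ρ Q) (hnd : QNondeg Q) (hmet : Metabolic ρ Q)
    (U : Submodule K V) (hU : IsSubrep ρ U) (hU0 : ∀ v ∈ U, Q v = 0) :
    ∃ M : Submodule K V, IsSubrep ρ M ∧ U ≤ M ∧ M = qperp Q M ∧ ∀ v ∈ M, Q v = 0 := by
  obtain ⟨N, hN, hNperp, hN0⟩ := hmet
  obtain ⟨hMperp, hM0⟩ := isLagrangian_sup_inf_qperp hnd ⟨hNperp, hN0⟩ hU0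
  exact ⟨U ⊔ (N ⊓ qperp Q U), hU.sup (hN.inf (hU.qperp hinv)), le_sup_left, hMperp, hM0⟩

/-- In a metabolic equivariant quadratic module every isotropic
`KG`-submodule is contained in a self-perpendicular isotropic `KG`-submodule. -/
theorem stmt0 [Finite G] [FiniteDimensional K V]
    (ρ : Representation K G V) (Q : QuadraticForm K V)
    (hinv : GInvariantQF ρ Q) (hnd : QNondeg Q) (hmet : Metabolic ρ Q)
    (U : Submodule K V) (hU : IsSubrep ρ U) (hU0 : ∀ v ∈ U, Q v = 0) :
    ∃ M : Submodule K V, IsSubrep ρ M ∧ U ≤ M ∧ M = qperp Q M ∧ ∀ v ∈ M, Q v = 0 :=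
  stmt0_general ρ Q hinv hnd hmet U hU hU0
end

section
/- Let (V,Q) and (W,Q') be non-degenerate equivariant quadratic KG-modules with (V,Q) metabolic. Then (W,Q') is metabolic if and only if the orthogonal direct sum (W,Q') ⊥ (V,Q) is metabolic. -/
open QuadraticMap

variable {K : Type*} [Field K] {G : Type*} [Group G]
variable {V W : Type*} [AddCommGroup V] [Module K V] [AddCommGroup W] [Module K W]

/-!
Call a `G`-stable `N` with `N = N^⊥` and `Q(N) = 0` a Lagrangian.
If `M ≤ W` and `L ≤ V` are Lagrangians, so is `M × L`. Conversely, given Lagrangians `N` of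
`W ⊥ V` and `L` of `V`, let `M` be the projection to `W` of `N ⊓ (W × L)`. By non-degeneracy the
orthogonal of `N ⊓ (W × L)` is `N ⊔ (0 × L)`, so `M^⊥ = {w | (w, 0) ∈ N ⊔ (0 × L)}`, which is `M`
again since `(w, 0) = (w, v) + (0, -v)`.
-/

open QuadraticMap

namespace LinearMap.BilinForm

theorem orthogonal_sup_s1 (B : LinearMap.BilinForm K V) (X Y : Submodule K V) :
    B.orthogonal (X ⊔ Y) = B.orthogonal X ⊓ B.orthogonal Y := by
  ext z
  simp only [mem_orthogonal_iff, Submodule.mem_inf]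
  refine ⟨fun h => ⟨fun x hx => h x (Submodule.mem_sup_left hx),
    fun y hy => h y (Submodule.mem_sup_right hy)⟩, ?_⟩
  rintro ⟨hX, hY⟩ _ hxy
  obtain ⟨x, hx, y, hy, rfl⟩ := Submodule.mem_sup.1 hxy
  rw [add_left, hX x hx, hY y hy, add_zero]

theorem orthogonal_inf [FiniteDimensional K V] {B : LinearMap.BilinForm K V}
    (hB : B.Nondegenerate) (hB₀ : B.IsRefl) (X Y : Submodule K V) :
    B.orthogonal (X ⊓ Y) = B.orthogonal X ⊔ B.orthogonal Y := by
  rw [← orthogonal_orthogonal hB hB₀ (B.orthogonal X ⊔ B.orthogonal Y), orthogonal_sup_s1,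
    orthogonal_orthogonal hB hB₀, orthogonal_orthogonal hB hB₀]

end LinearMap.BilinForm

theorem QuadraticMap.polarBilin_isRefl (Q : QuadraticForm K V) : Q.polarBilin.IsRefl :=
  fun x y h => by rwa [polarBilin_apply_apply, polar_comm, ← polarBilin_apply_apply]

section Perp

variable {Q : QuadraticForm K V} {Q' : QuadraticForm K W}

theorem mem_qperp_iff {U : Submodule K V} {v : V} :
    v ∈ qperp Q U ↔ ∀ u ∈ U, polar Q u v = 0 :=
  Iff.rfl

theorem qperp_top (hQ : QNondeg Q) : qperp Q ⊤ = ⊥ :=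
  LinearMap.BilinForm.orthogonal_top_eq_bot hQ

theorem qperp_inf [FiniteDimensional K V] (hQ : QNondeg Q) (X Y : Submodule K V) :
    qperp Q (X ⊓ Y) = qperp Q X ⊔ qperp Q Y :=
  LinearMap.BilinForm.orthogonal_inf hQ (polarBilin_isRefl Q) X Y

theorem QNondeg.prod (hQ' : QNondeg Q') (hQ : QNondeg Q) : QNondeg (Q'.prod Q) :=
  (polarBilin_isRefl _).nondegenerate_iff_separatingLeft.2 fun x hx =>
    Prod.ext (hQ'.1 x.1 fun w => by simpa using hx (w, 0))
      (hQ.1 x.2 fun v => by simpa using hx (0, v))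

theorem qperp_prod (M : Submodule K W) (L : Submodule K V) :
    qperp (Q'.prod Q) (M.prod L) = (qperp Q' M).prod (qperp Q L) := by
  ext ⟨w, v⟩
  simp only [mem_qperp_iff, Submodule.mem_prod, polar_prod, Prod.forall]
  refine ⟨fun h => ⟨fun m hm => by simpa using h m 0 ⟨hm, L.zero_mem⟩,
    fun l hl => by simpa using h 0 l ⟨M.zero_mem, hl⟩⟩, ?_⟩
  rintro ⟨hM, hL⟩ m l ⟨hm, hl⟩
  rw [hM m hm, hL l hl, add_zero]

theorem comap_inl_qperp_prod (P : Submodule K (W × V)) :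
    (qperp (Q'.prod Q) P).comap (LinearMap.inl K W V) =
      qperp Q' (P.map (LinearMap.fst K W V)) := by
  ext w
  simp [mem_qperp_iff]

end Perp

theorem map_fst_inf_prod_eq_comap_inl_sup (N : Submodule K (W × V)) (L : Submodule K V) :
    (N ⊓ (⊤ : Submodule K W).prod L).map (LinearMap.fst K W V) =
      (N ⊔ (⊥ : Submodule K W).prod L).comap (LinearMap.inl K W V) := by
  ext w
  simp only [Submodule.mem_map, Submodule.mem_comap, Submodule.mem_inf, Submodule.mem_prod,
    Submodule.mem_top, LinearMap.fst_apply, LinearMap.inl_apply]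
  constructor
  · rintro ⟨⟨w, v⟩, ⟨hN, -, hv⟩, rfl⟩
    exact Submodule.mem_sup.2 ⟨(w, v), hN, (0, -v), by simpa using hv, by simp⟩
  · intro h
    obtain ⟨n, hn, b, ⟨hb₁, hb₂⟩, hnb⟩ := Submodule.mem_sup.1 h
    have hn₁ : n.1 = w := by simpa [(Submodule.mem_bot K).1 hb₁] using congrArg Prod.fst hnb
    have hn₂ : n.2 = -b.2 := eq_neg_of_add_eq_zero_left (congrArg Prod.snd hnb)
    exact ⟨n, ⟨hn, trivial, hn₂ ▸ L.neg_mem hb₂⟩, hn₁⟩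

section Subrep

variable {ρ : Representation K G V} {σ : Representation K G W}

theorem isSubrep_top (ρ : Representation K G V) : IsSubrep ρ ⊤ :=
  fun _ _ _ => trivial

theorem IsSubrep.inf_s1 {X Y : Submodule K V} (hX : IsSubrep ρ X) (hY : IsSubrep ρ Y) :
    IsSubrep ρ (X ⊓ Y) :=
  fun g _ hv => ⟨hX g _ hv.1, hY g _ hv.2⟩

theorem IsSubrep.prod {M : Submodule K W} {L : Submodule K V} (hM : IsSubrep σ M)
    (hL : IsSubrep ρ L) : IsSubrep (prodRep σ ρ) (M.prod L) :=
  fun g _ hx => ⟨hM g _ hx.1, hL g _ hx.2⟩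

theorem IsSubrep.map_fst {N : Submodule K (W × V)} (hN : IsSubrep (prodRep σ ρ) N) :
    IsSubrep σ (N.map (LinearMap.fst K W V)) := by
  rintro g _ ⟨x, hx, rfl⟩
  exact ⟨prodRep σ ρ g x, hN g x hx, rfl⟩

variable {Q : QuadraticForm K V} {Q' : QuadraticForm K W}

theorem Metabolic.prod (hW : Metabolic σ Q') (hV : Metabolic ρ Q) :
    Metabolic (prodRep σ ρ) (Q'.prod Q) := by
  obtain ⟨M, hMrep, hMperp, hMQ⟩ := hW
  obtain ⟨L, hLrep, hLperp, hLQ⟩ := hV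
  refine ⟨M.prod L, hMrep.prod hLrep, ?_, ?_⟩
  · rw [qperp_prod, ← hMperp, ← hLperp]
  · rintro ⟨w, v⟩ ⟨hw, hv⟩
    simp [hMQ w hw, hLQ v hv]

theorem Metabolic.of_prod [FiniteDimensional K V] [FiniteDimensional K W] (hQ' : QNondeg Q')
    (hQ : QNondeg Q) (hV : Metabolic ρ Q) (hWV : Metabolic (prodRep σ ρ) (Q'.prod Q)) :
    Metabolic σ Q' := by
  obtain ⟨L, hLrep, hLperp, hLQ⟩ := hV
  obtain ⟨N, hNrep, hNperp, hNQ⟩ := hWV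
  refine ⟨(N ⊓ (⊤ : Submodule K W).prod L).map (LinearMap.fst K W V),
    (hNrep.inf_s1 ((isSubrep_top σ).prod hLrep)).map_fst, ?_, ?_⟩
  · have hperp : qperp (Q'.prod Q) (N ⊓ (⊤ : Submodule K W).prod L) =
        N ⊔ (⊥ : Submodule K W).prod L := by
      rw [qperp_inf (hQ'.prod hQ), ← hNperp, qperp_prod, qperp_top hQ', ← hLperp]
    rw [← comap_inl_qperp_prod, hperp, map_fst_inf_prod_eq_comap_inl_sup]
  · rintro _ ⟨⟨w, v⟩, ⟨hN, -, hv⟩, rfl⟩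
    simpa [hLQ v hv] using hNQ (w, v) hN

end Subrep

theorem stmt1_general [FiniteDimensional K V] [FiniteDimensional K W]
    (ρ : Representation K G V) (Q : QuadraticForm K V)
    (σ : Representation K G W) (Q' : QuadraticForm K W)
    (hnd : QNondeg Q)
    (hnd' : QNondeg Q')
    (hmet : Metabolic ρ Q) :
    Metabolic σ Q' ↔ Metabolic (prodRep σ ρ) (Q'.prod Q) :=
  ⟨fun hW => hW.prod hmet, hmet.of_prod hnd' hnd⟩

/-- if `(V,Q)` is metabolic then `(W,Q')` is metabolic iff
`(W,Q') ⊥ (V,Q)` is metabolic. -/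
theorem stmt1 [Finite G] [FiniteDimensional K V] [FiniteDimensional K W]
    (ρ : Representation K G V) (Q : QuadraticForm K V)
    (σ : Representation K G W) (Q' : QuadraticForm K W)
    (hinv : GInvariantQF ρ Q) (hnd : QNondeg Q)
    (hinv' : GInvariantQF σ Q') (hnd' : QNondeg Q')
    (hmet : Metabolic ρ Q) :
    Metabolic σ Q' ↔ Metabolic (prodRep σ ρ) (Q'.prod Q) :=
  stmt1_general ρ Q σ Q' hnd hnd' hmet
end

section
/- Let K be a finite field of characteristic 2, G a finite group, and V a simple self-dual KG-module that is not isomorphic to the trivial module. Then every G-invariant symmetric bilinear form B on V is alternating, i.e. B(v,v) = 0 for all v ∈ V. -/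
open QuadraticMap

variable {K : Type*} [Field K] {G : Type*} [Group G]
variable {V W : Type*} [AddCommGroup V] [Module K V] [AddCommGroup W] [Module K W]

/-- over a finite field of characteristic 2, every `G`-invariant symmetric
bilinear form on a non-trivial simple self-dual `KG`-module is alternating. -/
theorem stmt8 [Fintype K] (h2 : ringChar K = 2) [Finite G] [FiniteDimensional K V]
    (ρ : Representation K G V) (hsimple : SimpleRep ρ) (hsd : SelfDualRep ρ)
    (hnt : ¬∃ f : V ≃ₗ[K] K, ∀ g v, f (ρ g v) = f v)
    (B : LinearMap.BilinForm K V) (hsymm : ∀ v w, B v w = B w v)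
    (hBinv : ∀ g v w, B (ρ g v) (ρ g w) = B v w) :
    ∀ v, B v v = 0 := by
  haveI : Fact (Nat.Prime 2) := ⟨by norm_num⟩
  haveI hchar : CharP K 2 := ringChar.of_eq h2
  have h2z : (2 : K) = 0 := by
    simpa using CharP.cast_eq_zero K 2
  haveI : ExpChar K 2 := ExpChar.prime (by norm_num)
  -- the Frobenius equivalence
  set e := frobeniusEquiv K 2 with he
  have hq_add : ∀ v w : V, B (v + w) (v + w) = B v v + B w w := by
    intro v w
    have : B v w + B w v = 0 := by
      rw [hsymm v w, ← two_mul, h2z, zero_mul]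
    simp only [map_add, LinearMap.add_apply]
    linear_combination this
  have hq_smul : ∀ (c : K) (v : V), B (c • v) (c • v) = c ^ 2 * B v v := by
    intro c v
    simp only [LinearMap.map_smul, LinearMap.smul_apply, smul_eq_mul]
    ring
  let f : V →ₗ[K] K :=
    { toFun := fun v => e.symm (B v v)
      map_add' := fun v w => by
        show e.symm (B (v + w) (v + w)) = _
        rw [hq_add]; exact map_add e.symm _ _
      map_smul' := fun c v => by
        show e.symm (B (c • v) (c • v)) = _
        simp only [hq_smul, RingHom.id_apply, smul_eq_mul, map_mul]
        congr 1
        have : c ^ 2 = e c := rfl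
        rw [this, e.symm_apply_apply] }
  have hf : ∀ g v, f (ρ g v) = f v := by
    intro g v
    show e.symm (B (ρ g v) (ρ g v)) = e.symm (B v v)
    rw [hBinv]
  have hker : IsSubrep ρ (LinearMap.ker f) := by
    intro g v hv
    simp only [LinearMap.mem_ker] at hv ⊢
    rw [hf, hv]
  rcases hsimple.2 _ hker with hbot | htop
  · -- f injective: build a linear equiv V ≃ K, contradiction
    exfalso
    have hinj : Function.Injective f := by
      rw [← LinearMap.ker_eq_bot]; exact hbot
    haveI := hsimple.1
    obtain ⟨v, hv⟩ := exists_ne (0 : V)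
    have hfv : f v ≠ 0 := fun h => hv (hinj (by simp [h]))
    have hsurj : Function.Surjective f := by
      intro a
      exact ⟨(a * (f v)⁻¹) • v, by
        rw [f.map_smul, smul_eq_mul, mul_assoc, inv_mul_cancel₀ hfv, mul_one]⟩
    exact hnt ⟨LinearEquiv.ofBijective f ⟨hinj, hsurj⟩, fun g v => hf g v⟩
  · intro v
    have : f v = 0 := by
      have : v ∈ LinearMap.ker f := htop ▸ Submodule.mem_top
      simpa using this
    have := congrArg e this
    rw [show f v = e.symm (B v v) from rfl, e.apply_symm_apply, map_zero] at this
    exact this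
end

section
/- Let K be a finite field of characteristic 2, G a finite group, and V a simple self-dual KG-module. Then any two non-zero G-invariant symmetric bilinear forms on V are KG-isometric, i.e. there is a KG-module automorphism of V carrying one form to the other. -/
/-! Since `B'` is nondegenerate on the simple module, `B = B' (φ ·) ·` for an equivariant
endomorphism `φ`, which is `B'`-self-adjoint because both forms are symmetric. By Schur's lemma
`φ` is a unit of the finite ring `Module.End K V`, and in characteristic 2 its order is odd, so
`φ = c * c` with `c` a power of `φ`. Then `c` is an equivariant automorphism, `B'`-self-adjoint,
and `B' (c v) (c w) = B' v (φ w) = B v w`. -/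

open QuadraticMap

variable {K : Type*} [Field K] {G : Type*} [Group G]
variable {V W : Type*} [AddCommGroup V] [Module K V] [AddCommGroup W] [Module K W]

open LinearMap (IsAdjointPair)

theorem exists_pow_mul_self_eq_of_odd_orderOf {M : Type*} [Monoid M] {x : M}
    (hx : Odd (orderOf x)) : ∃ n, x ^ n * x ^ n = x := by
  obtain ⟨m, hm⟩ := hx
  refine ⟨m + 1, ?_⟩
  rw [← pow_add, show m + 1 + (m + 1) = orderOf x + 1 by omega, pow_succ, pow_orderOf_eq_one,
    one_mul]

theorem LinearMap.IsAdjointPair.pow {R M N : Type*} [CommSemiring R] [AddCommMonoid M]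
    [Module R M] [AddCommMonoid N] [Module R N] {B : M →ₗ[R] M →ₗ[R] N} {f : Module.End R M}
    (hf : IsAdjointPair B B f f) (n : ℕ) : IsAdjointPair B B ⇑(f ^ n) ⇑(f ^ n) := by
  induction n with
  | zero => exact LinearMap.isAdjointPair_one
  | succ n ih =>
    have := ih.mul hf
    rwa [← pow_succ, ← pow_succ'] at this

theorem isAdjointPair_of_invariant {ρ : Representation K G V} {B : LinearMap.BilinForm K V}
    (hB : ∀ g v w, B (ρ g v) (ρ g w) = B v w) (g : G) : IsAdjointPair B B (ρ g) (ρ g⁻¹) := by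
  intro v w
  rw [← hB g v (ρ g⁻¹ w), Representation.self_inv_apply]

namespace SimpleRep

variable {ρ : Representation K G V}

theorem injective_of_commute (hρ : SimpleRep ρ) {f : Module.End K V}
    (hf : ∀ g, Commute f (ρ g)) (hf0 : f ≠ 0) : Function.Injective f := by
  have hker : IsSubrep ρ (LinearMap.ker f) := fun g v hv => by
    rw [LinearMap.mem_ker, ← Module.End.mul_apply, (hf g).eq, Module.End.mul_apply,
      LinearMap.mem_ker.mp hv, map_zero]
  rcases hρ.2 _ hker with h | h
  · exact LinearMap.ker_eq_bot.mp h
  · exact absurd (LinearMap.ker_eq_top.mp h) hf0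

theorem bijective_of_commute [FiniteDimensional K V] (hρ : SimpleRep ρ) {f : Module.End K V}
    (hf : ∀ g, Commute f (ρ g)) (hf0 : f ≠ 0) : Function.Bijective f :=
  have hinj := hρ.injective_of_commute hf hf0
  ⟨hinj, LinearMap.injective_iff_surjective.mp hinj⟩

theorem nondegenerate_of_invariant [FiniteDimensional K V] (hρ : SimpleRep ρ)
    {B : LinearMap.BilinForm K V} (hB0 : B ≠ 0) (hB : ∀ g v w, B (ρ g v) (ρ g w) = B v w) :
    B.Nondegenerate := by
  have hker : IsSubrep ρ (LinearMap.ker B) := fun g v hv => by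
    rw [LinearMap.mem_ker] at hv ⊢
    ext w
    rw [isAdjointPair_of_invariant hB g v w, hv, LinearMap.zero_apply, LinearMap.zero_apply]
  rcases hρ.2 _ hker with h | h
  · exact LinearMap.BilinForm.nondegenerate_iff_ker_eq_bot.mpr h
  · exact absurd (LinearMap.ker_eq_top.mp h) hB0

/-- An involution `y ≠ 1` would make `y - 1` a nonzero equivariant endomorphism with
`(y - 1)² = y² - 1 = 0`, against Schur's lemma. -/
theorem odd_orderOf_of_commute (hρ : SimpleRep ρ) (h2 : ringChar K = 2) {f : Module.End K V}
    (hf : ∀ g, Commute f (ρ g)) (hfin : IsOfFinOrder f) : Odd (orderOf f) := by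
  have : CharP K 2 := ringChar.of_eq h2
  by_contra hodd
  obtain ⟨k, hk⟩ := Nat.not_odd_iff_even.mp hodd
  set y := f ^ k
  have hyy : y * y = 1 := by rw [← pow_add, ← hk, pow_orderOf_eq_one]
  have hpos := hfin.orderOf_pos
  have hy1 : y ≠ 1 := pow_ne_one_of_lt_orderOf (by omega) (by omega)
  have htwo : (2 : Module.End K V) = 0 := by
    rw [← map_ofNat (algebraMap K (Module.End K V)) 2, CharTwo.two_eq_zero, map_zero]
  have hsq : (y - 1) * (y - 1) = 0 := by
    calc (y - 1) * (y - 1) = y * y + 1 - 2 * y := by noncomm_ring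
      _ = 0 := by rw [hyy, htwo, zero_mul, sub_zero, one_add_one_eq_two, htwo]
  have hinj := hρ.injective_of_commute (fun g => ((hf g).pow_left k).sub_left (Commute.one_left _))
    (sub_ne_zero.mpr hy1)
  exact hy1 (sub_eq_zero.mp (LinearMap.ext fun v => hinj (by
    rw [← Module.End.mul_apply, hsq, LinearMap.zero_apply, map_zero])))

end SimpleRep

namespace LinearMap.BilinForm

variable [FiniteDimensional K V] {B₁ B₂ : LinearMap.BilinForm K V}

theorem commute_symmCompOfNondegenerate (b₂ : B₂.Nondegenerate) {f g : Module.End K V}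
    (h₁ : IsAdjointPair B₁ B₁ f g) (h₂ : IsAdjointPair B₂ B₂ f g) :
    Commute (B₁.symmCompOfNondegenerate B₂ b₂) f := by
  ext v
  refine (B₂.toDual b₂).injective (LinearMap.ext fun w => ?_)
  rw [toDual_def, toDual_def, Module.End.mul_apply, Module.End.mul_apply,
    symmCompOfNondegenerate_left_apply, h₁, h₂, symmCompOfNondegenerate_left_apply]

theorem isAdjointPair_symmCompOfNondegenerate (b₂ : B₂.Nondegenerate)
    (h₁ : ∀ v w, B₁ v w = B₁ w v) (h₂ : ∀ v w, B₂ v w = B₂ w v) :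
    IsAdjointPair B₂ B₂ (B₁.symmCompOfNondegenerate B₂ b₂) (B₁.symmCompOfNondegenerate B₂ b₂) := by
  intro v w
  rw [symmCompOfNondegenerate_left_apply, h₂ v, symmCompOfNondegenerate_left_apply, h₁]

end LinearMap.BilinForm

theorem stmt9_general [Fintype K] (h2 : ringChar K = 2) [FiniteDimensional K V]
    (ρ : Representation K G V) (hsimple : SimpleRep ρ)
    (B B' : LinearMap.BilinForm K V) (hB : B ≠ 0) (hB' : B' ≠ 0)
    (hsymm : ∀ v w, B v w = B w v) (hsymm' : ∀ v w, B' v w = B' w v)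
    (hBinv : ∀ g v w, B (ρ g v) (ρ g w) = B v w)
    (hB'inv : ∀ g v w, B' (ρ g v) (ρ g w) = B' v w) :
    ∃ e : V ≃ₗ[K] V, (∀ g v, e (ρ g v) = ρ g (e v)) ∧ ∀ v w, B' (e v) (e w) = B v w := by
  have hnd := hsimple.nondegenerate_of_invariant hB' hB'inv
  set φ := B.symmCompOfNondegenerate B' hnd
  have hφB : ∀ v w, B' (φ v) w = B v w :=
    fun v w => B.symmCompOfNondegenerate_left_apply hnd w v
  have hφ0 : φ ≠ 0 := fun h => hB (LinearMap.ext₂ fun v w => by simp [← hφB, h])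
  have hφρ (g : G) : Commute φ (ρ g) := LinearMap.BilinForm.commute_symmCompOfNondegenerate hnd
    (isAdjointPair_of_invariant hBinv g) (isAdjointPair_of_invariant hB'inv g)
  have hφunit : IsUnit φ := (Module.End.isUnit_iff φ).mpr (hsimple.bijective_of_commute hφρ hφ0)
  have : Finite (Module.End K V) := Module.finite_of_finite K
  obtain ⟨n, hn⟩ := exists_pow_mul_self_eq_of_odd_orderOf
    (hsimple.odd_orderOf_of_commute h2 hφρ hφunit.isOfFinOrder)
  set c := φ ^ n
  have hcρ (g : G) : Commute c (ρ g) := (hφρ g).pow_left n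
  have hc0 : c ≠ 0 := fun hc => hφ0 (by rw [← hn, hc, zero_mul])
  have hφadj : IsAdjointPair B' B' φ φ :=
    LinearMap.BilinForm.isAdjointPair_symmCompOfNondegenerate hnd hsymm hsymm'
  refine ⟨LinearEquiv.ofBijective c (hsimple.bijective_of_commute hcρ hc0),
    fun g v => LinearMap.congr_fun (hcρ g) v, fun v w => ?_⟩
  calc B' (c v) (c w) = B' v (c (c w)) := (hφadj.pow n) v (c w)
    _ = B' (φ v) w := by rw [← Module.End.mul_apply, hn, hφadj]
    _ = B v w := hφB v w

/-- over a finite field of characteristic 2, any two non-zero `G`-invariant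
symmetric bilinear forms on a simple self-dual `KG`-module are `KG`-isometric. -/
theorem stmt9 [Fintype K] (h2 : ringChar K = 2) [Finite G] [FiniteDimensional K V]
    (ρ : Representation K G V) (hsimple : SimpleRep ρ) (hsd : SelfDualRep ρ)
    (B B' : LinearMap.BilinForm K V) (hB : B ≠ 0) (hB' : B' ≠ 0)
    (hsymm : ∀ v w, B v w = B w v) (hsymm' : ∀ v w, B' v w = B' w v)
    (hBinv : ∀ g v w, B (ρ g v) (ρ g w) = B v w)
    (hB'inv : ∀ g v w, B' (ρ g v) (ρ g w) = B' v w) :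
    ∃ e : V ≃ₗ[K] V, (∀ g v, e (ρ g v) = ρ g (e v)) ∧ ∀ v w, B' (e v) (e w) = B v w :=
  stmt9_general h2 ρ hsimple B B' hB hB' hsymm hsymm' hBinv hB'inv
end

section
/- Let K be a finite field of characteristic 2, G a finite group, and W a direct sum of pairwise non-isomorphic simple self-dual KG-modules. Then there exists a non-degenerate G-invariant symmetric bilinear form on W, and it is unique up to KG-isometry. -/
/-!
Existence: a simple self-dual summand carries a nonzero invariant form `f`, and any nonzero
invariant symmetric form on a simple module is nondegenerate by Schur's lemma. In
characteristic 2, `f + fᵀ` vanishes only if `f` is symmetric, so one of `f`, `f + fᵀ` is a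
nonzero symmetric invariant form; the orthogonal sum of these forms over the summands works.

Uniqueness: for two such forms `B`, `B'`, the map `e` with `B' (e v) w = B v w` is a
`B'`-self-adjoint `KG`-automorphism. The algebra `K[e]` consists of `KG`-endomorphisms, and it is
reduced: a `KG`-endomorphism preserves every summand (the summands are pairwise non-isomorphic),
hence is zero or injective on it, so it cannot square to zero unless it vanishes. A finite
reduced commutative algebra with `2 = 0` has a bijective Frobenius, so `e = s²` with `s ∈ K[e]`,
and `s` is a `KG`-isometry: `B' (s v) (s w) = B' (s² v) w = B v w`.
-/

open QuadraticMap

variable {K : Type*} [Field K] {G : Type*} [Group G]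
variable {V W : Type*} [AddCommGroup V] [Module K V] [AddCommGroup W] [Module K W]

/-- The restriction of a representation to an invariant submodule. -/
def subRep (ρ : Representation K G V) (U : Submodule K V) (hU : IsSubrep ρ U) :
    Representation K G U :=
  ⟨⟨fun g => (ρ g).restrict (hU g),
    by ext v; simp [LinearMap.restrict_apply]⟩,
    fun g h => by ext v; simp [LinearMap.restrict_apply]⟩

open Representation

section Schur

variable {σ : Representation K G V} {τ : Representation K G W} {f : V →ₗ[K] W}

lemma isSubrep_ker (hf : IsIntertwiningMap σ τ f) : IsSubrep σ (LinearMap.ker f) :=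
  fun g v hv => by rw [LinearMap.mem_ker, hf.isIntertwining, LinearMap.mem_ker.mp hv, map_zero]

lemma isSubrep_range (hf : IsIntertwiningMap σ τ f) : IsSubrep τ (LinearMap.range f) := by
  rintro g _ ⟨v, rfl⟩
  exact ⟨σ g v, hf.isIntertwining g v⟩

lemma SimpleRep.injective_or_eq_zero (hσ : SimpleRep σ) (hf : IsIntertwiningMap σ τ f) :
    Function.Injective f ∨ f = 0 :=
  (hσ.2 _ (isSubrep_ker hf)).imp LinearMap.ker_eq_bot.mp LinearMap.ker_eq_top.mp

lemma SimpleRep.surjective_or_eq_zero (hτ : SimpleRep τ) (hf : IsIntertwiningMap σ τ f) :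
    Function.Surjective f ∨ f = 0 :=
  (hτ.2 _ (isSubrep_range hf)).symm.imp LinearMap.range_eq_top.mp LinearMap.range_eq_bot.mp

lemma SimpleRep.eq_zero_of_not_equiv (hσ : SimpleRep σ) (hτ : SimpleRep τ)
    (hni : ¬∃ e : V ≃ₗ[K] W, ∀ g v, e (σ g v) = τ g (e v)) (hf : IsIntertwiningMap σ τ f) :
    f = 0 := by
  rcases hσ.injective_or_eq_zero hf with hinj | hzero
  · refine (hτ.surjective_or_eq_zero hf).resolve_left fun hsurj => hni ?_
    exact ⟨LinearEquiv.ofBijective f ⟨hinj, hsurj⟩, hf.isIntertwining⟩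
  · exact hzero

end Schur

lemma simpleRep_subRep {ρ : Representation K G V} {U : Submodule K V} (hU : IsSubrep ρ U)
    (hsimple : U ≠ ⊥ ∧ ∀ N : Submodule K V, N ≤ U → IsSubrep ρ N → N = ⊥ ∨ N = U) :
    SimpleRep (subRep ρ U hU) := by
  refine ⟨Submodule.nontrivial_iff_ne_bot.mpr hsimple.1, fun N hN => ?_⟩
  have hmap : IsSubrep ρ (N.map U.subtype) := by
    rintro g _ ⟨u, hu, rfl⟩
    exact ⟨_, hN g u hu, rfl⟩
  refine (hsimple.2 _ (Submodule.map_subtype_le U N) hmap).imp (fun h => ?_) (fun h => ?_)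
  · exact Submodule.map_injective_of_injective U.injective_subtype
      (h.trans (Submodule.map_bot _).symm)
  · exact Submodule.map_injective_of_injective U.injective_subtype
      (h.trans U.map_subtype_top.symm)

def IsInvariantForm (σ : Representation K G V) (b : LinearMap.BilinForm K V) : Prop :=
  ∀ g v w, b (σ g v) (σ g w) = b v w

section InvariantForm

variable {σ : Representation K G V} {b : LinearMap.BilinForm K V}

lemma IsInvariantForm.apply_left (hb : IsInvariantForm σ b) (g : G) (v w : V) :
    b (σ g v) w = b v (σ g⁻¹ w) := by
  conv_lhs => rw [← σ.self_inv_apply g w]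
  exact hb g v _

lemma IsInvariantForm.isIntertwiningMap_dual (hb : IsInvariantForm σ b) :
    IsIntertwiningMap σ σ.dual b :=
  ⟨fun g v => LinearMap.ext fun w => by
    simp [dual_apply, Module.Dual.transpose_apply, hb.apply_left]⟩

lemma IsInvariantForm.nondegenerate (hσ : SimpleRep σ) (hb : IsInvariantForm σ b)
    (hsymm : ∀ v w, b v w = b w v) (hb0 : b ≠ 0) : b.Nondegenerate := by
  refine (LinearMap.IsRefl.nondegenerate_iff_separatingLeft fun v w h => ?_).mpr ?_
  · rw [hsymm, h]
  rw [LinearMap.separatingLeft_iff_ker_eq_bot, LinearMap.ker_eq_bot]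
  exact (hσ.injective_or_eq_zero hb.isIntertwiningMap_dual).resolve_right hb0

lemma SelfDualRep.exists_invariantForm [Nontrivial V] (hsd : SelfDualRep σ) :
    ∃ b : LinearMap.BilinForm K V, b ≠ 0 ∧ IsInvariantForm σ b := by
  obtain ⟨f, hf⟩ := hsd
  refine ⟨f.toLinearMap, fun h => ?_, fun g v w => ?_⟩
  · obtain ⟨v, hv⟩ := exists_ne (0 : V)
    exact hv (f.map_eq_zero_iff.mp (LinearMap.congr_fun h v))
  · simp [hf, dual_apply, Module.Dual.transpose_apply]

lemma SimpleRep.exists_symm_nondegenerate_invariantForm [CharP K 2] (hσ : SimpleRep σ)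
    (hsd : SelfDualRep σ) :
    ∃ b : LinearMap.BilinForm K V, b.Nondegenerate ∧ (∀ v w, b v w = b w v) ∧
      IsInvariantForm σ b := by
  have := hσ.1
  obtain ⟨f, hf0, hf⟩ := hsd.exists_invariantForm
  by_cases hsymm : ∀ v w, f v w = f w v
  · exact ⟨f, hf.nondegenerate hσ hsymm hf0, hsymm, hf⟩
  have hsymm' : ∀ v w, (f + f.flip) v w = (f + f.flip) w v := fun v w => by
    simp [add_comm]
  have hinv : IsInvariantForm σ (f + f.flip) := fun g v w => by simp [hf g]
  have hne : f + f.flip ≠ 0 := fun h => hsymm fun v w =>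
    CharTwo.add_eq_zero.mp (by simpa using LinearMap.congr_fun₂ h v w)
  exact ⟨_, hinv.nondegenerate hσ hsymm' hne, hsymm', hinv⟩

end InvariantForm

namespace DirectSum.IsInternal

variable {ι : Type*} [DecidableEq ι] {S : ι → Submodule K V} (hint : DirectSum.IsInternal S)

noncomputable def proj (i : ι) : V →ₗ[K] S i :=
  DirectSum.component K ι (fun j => S j) i ∘ₗ
    (LinearEquiv.ofBijective (DirectSum.coeLinearMap S) hint).symm.toLinearMap

lemma proj_apply_self (i : ι) (u : S i) : hint.proj i u = u := by
  simp [proj, ← DirectSum.apply_eq_component, hint.ofBijective_coeLinearMap_same u]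

lemma proj_apply_of_ne {i j : ι} (hij : i ≠ j) (u : S i) : hint.proj j u = 0 := by
  simpa [proj, ← DirectSum.apply_eq_component] using hint.ofBijective_coeLinearMap_of_ne hij u

lemma sum_proj [Fintype ι] (v : V) : ∑ i, (hint.proj i v : V) = v := by
  set e := LinearEquiv.ofBijective (DirectSum.coeLinearMap S) hint
  calc ∑ i, (hint.proj i v : V)
      = ∑ i, DirectSum.coeLinearMap S (DirectSum.of (fun j => S j) i (e.symm v i)) :=
        Finset.sum_congr rfl fun i _ => (DirectSum.coeLinearMap_of S i _).symm
    _ = e (e.symm v) := by rw [← map_sum, DirectSum.sum_univ_of]; rfl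
    _ = v := e.apply_symm_apply v

lemma proj_isIntertwiningMap [Fintype ι] {ρ : Representation K G V}
    (hS : ∀ i, IsSubrep ρ (S i)) (i : ι) :
    IsIntertwiningMap ρ (subRep ρ (S i) (hS i)) (hint.proj i) := by
  refine ⟨fun g v => ?_⟩
  conv_lhs => rw [← hint.sum_proj v, map_sum, map_sum]
  rw [Finset.sum_eq_single i (fun j _ hji => ?_) (by simp)]
  · exact hint.proj_apply_self i (subRep ρ (S i) (hS i) g _)
  · exact hint.proj_apply_of_ne hji (subRep ρ (S j) (hS j) g _)

end DirectSum.IsInternal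

def PairwiseNonisomorphic {ι : Type*} (ρ : Representation K G V) (S : ι → Submodule K V)
    (hS : ∀ i, IsSubrep ρ (S i)) : Prop :=
  ∀ i j, i ≠ j → ¬∃ f : S i ≃ₗ[K] S j,
    ∀ g u, f (subRep ρ (S i) (hS i) g u) = subRep ρ (S j) (hS j) g (f u)

section MultiplicityFree

variable {ι : Type*} [Fintype ι] [DecidableEq ι] {ρ : Representation K G V}
  {S : ι → Submodule K V}

theorem exists_symm_nondegenerate_invariantForm [CharP K 2] (hint : DirectSum.IsInternal S)
    (hS : ∀ i, IsSubrep ρ (S i)) (hsimple : ∀ i, SimpleRep (subRep ρ (S i) (hS i)))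
    (hsd : ∀ i, SelfDualRep (subRep ρ (S i) (hS i))) :
    ∃ B : LinearMap.BilinForm K V, B.Nondegenerate ∧ (∀ v w, B v w = B w v) ∧
      IsInvariantForm ρ B := by
  choose b hb hbsymm hbinv using
    fun i => (hsimple i).exists_symm_nondegenerate_invariantForm (hsd i)
  set B : LinearMap.BilinForm K V := ∑ i, (b i).compl₁₂ (hint.proj i) (hint.proj i)
  have hB : ∀ v w, B v w = ∑ i, b i (hint.proj i v) (hint.proj i w) := fun v w => by simp [B]
  have hBsymm : ∀ v w, B v w = B w v := fun v w => by simp only [hB, hbsymm]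
  refine ⟨B, (LinearMap.IsRefl.nondegenerate_iff_separatingLeft fun v w h => ?_).mpr ?_, hBsymm,
    fun g v w => ?_⟩
  · rw [hBsymm, h]
  · intro v hv
    have hproj : ∀ i, hint.proj i v = 0 := fun i => (hb i).1 _ fun u => by
      have := hv u
      rwa [hB, Finset.sum_eq_single i (fun j _ hji => by rw [hint.proj_apply_of_ne hji.symm,
        map_zero]) (by simp), hint.proj_apply_self] at this
    rw [← hint.sum_proj v]
    simp [hproj]
  · simp only [hB, (hint.proj_isIntertwiningMap hS _).isIntertwining]
    exact Finset.sum_congr rfl fun i _ => hbinv i g _ _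

lemma apply_mem_of_isIntertwiningMap (hint : DirectSum.IsInternal S) (hS : ∀ i, IsSubrep ρ (S i))
    (hsimple : ∀ i, SimpleRep (subRep ρ (S i) (hS i)))
    (hnoniso : PairwiseNonisomorphic ρ S hS)
    {x : Module.End K V} (hx : IsIntertwiningMap ρ ρ x) (i : ι) {u : V} (hu : u ∈ S i) :
    x u ∈ S i := by
  have hoff : ∀ j ≠ i, hint.proj j (x u) = 0 := fun j hji => by
    have hblock : IsIntertwiningMap (subRep ρ (S i) (hS i)) (subRep ρ (S j) (hS j))
        (hint.proj j ∘ₗ x ∘ₗ (S i).subtype) := ⟨fun g v => by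
      change hint.proj j (x (ρ g v)) = _
      rw [hx.isIntertwining]
      exact (hint.proj_isIntertwiningMap hS j).isIntertwining g _⟩
    exact LinearMap.congr_fun
      ((hsimple i).eq_zero_of_not_equiv (hsimple j) (hnoniso i j hji.symm) hblock) ⟨u, hu⟩
  rw [← hint.sum_proj (x u), Finset.sum_eq_single i (fun j _ hji => by rw [hoff j hji]; rfl)
    (by simp)]
  exact (hint.proj i (x u)).2

lemma eq_zero_of_isIntertwiningMap_of_mul_self_eq_zero (hint : DirectSum.IsInternal S)
    (hS : ∀ i, IsSubrep ρ (S i)) (hsimple : ∀ i, SimpleRep (subRep ρ (S i) (hS i)))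
    (hnoniso : PairwiseNonisomorphic ρ S hS)
    {x : Module.End K V} (hx : IsIntertwiningMap ρ ρ x) (hxx : x * x = 0) : x = 0 := by
  have hker : ∀ i, S i ≤ LinearMap.ker x := fun i => by
    let y : Module.End K (S i) :=
      x.restrict fun _ hu => apply_mem_of_isIntertwiningMap hint hS hsimple hnoniso hx i hu
    have hy : IsIntertwiningMap (subRep ρ (S i) (hS i)) (subRep ρ (S i) (hS i)) y :=
      ⟨fun g u => Subtype.ext (hx.isIntertwining g u)⟩
    rcases (hsimple i).injective_or_eq_zero hy with hinj | hy0
    · have := (hsimple i).1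
      obtain ⟨u, hu⟩ := exists_ne (0 : S i)
      refine absurd (hinj (hinj (Subtype.ext ?_))) hu
      simpa [y] using LinearMap.congr_fun hxx u
    · exact fun u hu => congrArg Subtype.val (LinearMap.congr_fun hy0 ⟨u, hu⟩)
  rw [← LinearMap.ker_eq_top, eq_top_iff, ← hint.submodule_iSup_eq_top]
  exact iSup_le hker

end MultiplicityFree

/-- Unlike `isSquare_of_charTwo'`, this allows the zero ring (here `K[e]` with `V = 0`). -/
lemma isSquare_of_two_eq_zero {R : Type*} [CommRing R] [Finite R] [IsReduced R]
    (h2 : (2 : R) = 0) (a : R) : IsSquare a := by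
  have hinj : Function.Injective fun x : R => x * x := fun x y hxy => by
    have hsq : (x - y) ^ 2 = 0 := by linear_combination hxy + (y ^ 2 - x * y) * h2
    exact sub_eq_zero.mp (IsReduced.eq_zero _ ⟨2, hsq⟩)
  obtain ⟨b, hb⟩ := Finite.injective_iff_surjective.mp hinj a
  exact ⟨b, hb.symm⟩

section Adjoin

variable {e a : Module.End K V}

lemma isIntertwiningMap_of_mem_adjoin {ρ : Representation K G V} (he : IsIntertwiningMap ρ ρ e)
    (ha : a ∈ Algebra.adjoin K {e}) : IsIntertwiningMap ρ ρ a := by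
  refine ⟨fun g v => LinearMap.congr_fun
    (Algebra.commute_of_mem_adjoin_singleton_of_commute ha ?_).eq.symm v⟩
  exact (LinearMap.ext fun v => he.isIntertwining g v).symm

lemma isAdjointPair_of_mem_adjoin {B : LinearMap.BilinForm K V}
    (he : LinearMap.IsAdjointPair B B e e) (ha : a ∈ Algebra.adjoin K {e}) :
    LinearMap.IsAdjointPair B B a a := by
  induction ha using Algebra.adjoin_induction with
  | mem x hx => rwa [Set.mem_singleton_iff.mp hx]
  | algebraMap r => simpa [Algebra.algebraMap_eq_smul_one] using
      (LinearMap.isAdjointPair_one (B := B)).smul r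
  | add x y _ _ hx hy => exact hx.add hy
  | mul x y hx' hy' hx hy => simpa [setLike_mul_comm hy' hx'] using hx.mul hy

lemma isReduced_adjoin {ι : Type*} [Fintype ι] [DecidableEq ι] {ρ : Representation K G V}
    {S : ι → Submodule K V} (hint : DirectSum.IsInternal S) (hS : ∀ i, IsSubrep ρ (S i))
    (hsimple : ∀ i, SimpleRep (subRep ρ (S i) (hS i)))
    (hnoniso : PairwiseNonisomorphic ρ S hS)
    (he : IsIntertwiningMap ρ ρ e) : IsReduced (Algebra.adjoin K {e}) :=
  (isReduced_iff_pow_one_lt 2 one_lt_two).mpr fun x hx => Subtype.ext <|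
    eq_zero_of_isIntertwiningMap_of_mul_self_eq_zero hint hS hsimple hnoniso
      (isIntertwiningMap_of_mem_adjoin he x.2)
      (by simpa [_root_.sq] using congrArg Subtype.val hx)

end Adjoin

section Uniqueness

variable {ρ : Representation K G V} {B B' : LinearMap.BilinForm K V}

lemma exists_isIntertwiningMap_forall_apply_eq [FiniteDimensional K V] (hB : B.Nondegenerate)
    (hB' : B'.Nondegenerate) (hBinv : IsInvariantForm ρ B) (hB'inv : IsInvariantForm ρ B') :
    ∃ e : V ≃ₗ[K] V, IsIntertwiningMap ρ ρ e ∧ ∀ v w, B' (e v) w = B v w := by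
  set e := (B.toDual hB).trans (B'.toDual hB').symm
  have he : ∀ v w, B' (e v) w = B v w := fun v w => by
    rw [← LinearMap.BilinForm.toDual_def hB', ← LinearMap.BilinForm.toDual_def hB]
    simp [e]
  refine ⟨e, ⟨fun g v => (B'.toDual hB').injective (LinearMap.ext fun w => ?_)⟩, he⟩
  simp only [LinearMap.BilinForm.toDual_def, LinearEquiv.coe_coe]
  rw [he, hBinv.apply_left, ← he, ← hB'inv.apply_left]

open scoped IsMulCommutative in
theorem exists_isometry_of_multiplicityFree [Finite K] [FiniteDimensional K V] [CharP K 2]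
    {ι : Type*} [Fintype ι] [DecidableEq ι] {S : ι → Submodule K V}
    (hint : DirectSum.IsInternal S) (hS : ∀ i, IsSubrep ρ (S i))
    (hsimple : ∀ i, SimpleRep (subRep ρ (S i) (hS i)))
    (hnoniso : PairwiseNonisomorphic ρ S hS)
    (hB : B.Nondegenerate) (hBsymm : ∀ v w, B v w = B w v) (hBinv : IsInvariantForm ρ B)
    (hB' : B'.Nondegenerate) (hB'symm : ∀ v w, B' v w = B' w v)
    (hB'inv : IsInvariantForm ρ B') :
    ∃ e : V ≃ₗ[K] V, IsIntertwiningMap ρ ρ e ∧ ∀ v w, B' (e v) (e w) = B v w := by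
  obtain ⟨e, he, hBe⟩ := exists_isIntertwiningMap_forall_apply_eq hB hB' hBinv hB'inv
  have hadj : LinearMap.IsAdjointPair B' B' (e : Module.End K V) e := fun v w => by
    rw [LinearEquiv.coe_coe, hBe, hBsymm, ← hBe, hB'symm]
  have := isReduced_adjoin hint hS hsimple hnoniso he
  have : Finite (Module.End K V) := Module.finite_of_finite K
  have h2 : (2 : Algebra.adjoin K {(e : Module.End K V)}) = 0 := by
    rw [← map_ofNat (algebraMap K _) 2, CharTwo.two_eq_zero, map_zero]
  obtain ⟨⟨s, hsA⟩, hs⟩ :=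
    isSquare_of_two_eq_zero h2 ⟨e, Algebra.self_mem_adjoin_singleton K _⟩
  have hss : s * s = e := (congrArg Subtype.val hs).symm
  have hcomp : ⇑s ∘ ⇑s = e := funext fun v => LinearMap.congr_fun hss v
  have hbij : Function.Bijective s :=
    ⟨Function.Injective.of_comp (f := s) (hcomp ▸ e.injective),
      Function.Surjective.of_comp (g := s) (hcomp ▸ e.surjective)⟩
  refine ⟨LinearEquiv.ofBijective s hbij, isIntertwiningMap_of_mem_adjoin he hsA, fun v w => ?_⟩
  simp only [LinearEquiv.ofBijective_apply]
  rw [← isAdjointPair_of_mem_adjoin hadj hsA, ← Module.End.mul_apply, hss]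
  exact hBe v w

end Uniqueness

theorem stmt12_general [Fintype K] (h2 : ringChar K = 2) [FiniteDimensional K V]
    (ρ : Representation K G V)
    (r : ℕ) (S : Fin r → Submodule K V) (hint : DirectSum.IsInternal S)
    (hS : ∀ i, IsSubrep ρ (S i))
    (hsimple : ∀ i, S i ≠ ⊥ ∧
      ∀ U : Submodule K V, U ≤ S i → IsSubrep ρ U → U = ⊥ ∨ U = S i)
    (hsd : ∀ i, SelfDualRep (subRep ρ (S i) (hS i)))
    (hnoniso : ∀ i j, i ≠ j → ¬∃ f : S i ≃ₗ[K] S j,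
      ∀ g u, f (subRep ρ (S i) (hS i) g u) = subRep ρ (S j) (hS j) g (f u)) :
    (∃ B : LinearMap.BilinForm K V, LinearMap.BilinForm.Nondegenerate B ∧
      (∀ v w, B v w = B w v) ∧ (∀ g v w, B (ρ g v) (ρ g w) = B v w)) ∧
    ∀ B B' : LinearMap.BilinForm K V,
      LinearMap.BilinForm.Nondegenerate B → (∀ v w, B v w = B w v) →
        (∀ g v w, B (ρ g v) (ρ g w) = B v w) →
      LinearMap.BilinForm.Nondegenerate B' → (∀ v w, B' v w = B' w v) →
        (∀ g v w, B' (ρ g v) (ρ g w) = B' v w) →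
      ∃ e : V ≃ₗ[K] V, (∀ g v, e (ρ g v) = ρ g (e v)) ∧ ∀ v w, B' (e v) (e w) = B v w := by
  have : CharP K 2 := ringChar.of_eq h2
  have hsimpleRep := fun i => simpleRep_subRep (hS i) (hsimple i)
  refine ⟨exists_symm_nondegenerate_invariantForm hint hS hsimpleRep hsd,
    fun B B' hB hBsymm hBinv hB' hB'symm hB'inv => ?_⟩
  obtain ⟨e, he, hiso⟩ := exists_isometry_of_multiplicityFree hint hS hsimpleRep hnoniso
    hB hBsymm hBinv hB' hB'symm hB'inv
  exact ⟨e, he.isIntertwining, hiso⟩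

/-- if `W` is a direct sum of pairwise non-isomorphic simple self-dual
`KG`-modules then there is a non-degenerate `G`-invariant symmetric bilinear form on `W`,
unique up to `KG`-isometry. -/
theorem stmt12 [Fintype K] (h2 : ringChar K = 2) [Finite G] [FiniteDimensional K V]
    (ρ : Representation K G V)
    (r : ℕ) (S : Fin r → Submodule K V) (hint : DirectSum.IsInternal S)
    (hS : ∀ i, IsSubrep ρ (S i))
    (hsimple : ∀ i, S i ≠ ⊥ ∧
      ∀ U : Submodule K V, U ≤ S i → IsSubrep ρ U → U = ⊥ ∨ U = S i)
    (hsd : ∀ i, SelfDualRep (subRep ρ (S i) (hS i)))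
    (hnoniso : ∀ i j, i ≠ j → ¬∃ f : S i ≃ₗ[K] S j,
      ∀ g u, f (subRep ρ (S i) (hS i) g u) = subRep ρ (S j) (hS j) g (f u)) :
    (∃ B : LinearMap.BilinForm K V, LinearMap.BilinForm.Nondegenerate B ∧
      (∀ v w, B v w = B w v) ∧ (∀ g v w, B (ρ g v) (ρ g w) = B v w)) ∧
    ∀ B B' : LinearMap.BilinForm K V,
      LinearMap.BilinForm.Nondegenerate B → (∀ v w, B v w = B w v) →
        (∀ g v w, B (ρ g v) (ρ g w) = B v w) →
      LinearMap.BilinForm.Nondegenerate B' → (∀ v w, B' v w = B' w v) →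
        (∀ g v w, B' (ρ g v) (ρ g w) = B' v w) →
      ∃ e : V ≃ₗ[K] V, (∀ g v, e (ρ g v) = ρ g (e v)) ∧ ∀ v w, B' (e v) (e w) = B v w :=
  stmt12_general h2 ρ r S hint hS hsimple hsd hnoniso
end

section
/- Let K be a finite field of characteristic 2, G a finite group, and (R,Q) a 2-dimensional anisotropic non-degenerate equivariant quadratic KG-module with socle ⟨e⟩ ≅ T, Q(e) = 1, on which G acts non-trivially. Then R has a basis (f,e) with B_Q(f,e) = 1 and Q(f) ∈ {0, α} (where X² + X + α is irreducible over K), and every g ∈ G acts either trivially or by f ↦ f + e, e ↦ e; thus the action factors through an epimorphism τ : G → C₂. -/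
open QuadraticMap

variable {K : Type*} [Field K] {G : Type*} [Group G]
variable {V W : Type*} [AddCommGroup V] [Module K V] [AddCommGroup W] [Module K W]

/-- The socle: the sum of all simple `KG`-submodules. -/
def socleRep (ρ : Representation K G V) : Submodule K V :=
  sSup {U : Submodule K V | IsSubrep ρ U ∧ U ≠ ⊥ ∧
    ∀ U' : Submodule K V, U' ≤ U → IsSubrep ρ U' → U' = ⊥ ∨ U' = U}

/-! Nondegeneracy gives `f` with `B_Q(f, e) = 1`. As `B_Q(e, e) = 0` in characteristic 2, the
vectors `f, e` form a basis, and replacing `f` by `f + a e` changes `Q f` by `a² + a`, which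
normalizes `Q f` to `0` unless `X² + X + Q f` has no root. An isometry `g` fixing `e` maps `f` to
a vector `f + d e` (its `B_Q(-, e)` is still `1`), and `Q (f + d e) = Q f` forces `d² + d = 0`, so
`g f ∈ {f, f + e}`. Hence the kernel of the action has index 2. -/

open Polynomial

theorem Polynomial.irreducible_X_sq_add_X_add_C {α : K} (h : ∀ a : K, a ^ 2 + a + α ≠ 0) :
    Irreducible (X ^ 2 + X + C α : K[X]) := by
  have hdeg : (X ^ 2 + X + C α : K[X]).natDegree = 2 := by compute_degree!
  exact irreducible_of_degree_le_three_of_not_isRoot (by simp [hdeg]) fun a => by simpa using h a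

theorem Subgroup.exists_surjective_monoidHom_zmod_two_of_index_eq_two {H : Subgroup G}
    (hH : H.index = 2) :
    ∃ τ : G →* Multiplicative (ZMod 2), Function.Surjective τ ∧ ∀ g, τ g = 1 ↔ g ∈ H := by
  classical
  have hgen : Multiplicative.ofAdd (1 : ZMod 2) * Multiplicative.ofAdd 1 = 1 := rfl
  let τ : G →* Multiplicative (ZMod 2) :=
    { toFun := fun g => if g ∈ H then 1 else Multiplicative.ofAdd 1
      map_one' := by simp
      map_mul' := fun a b => by
        by_cases ha : a ∈ H <;> by_cases hb : b ∈ H <;>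
          simp [Subgroup.mul_mem_iff_of_index_two hH, ha, hb, hgen] }
  obtain ⟨a, ha⟩ : ∃ a, a ∉ H := by
    by_contra! h
    simp [(Subgroup.eq_top_iff' H).2 h] at hH
  refine ⟨τ, fun x => ?_, fun g => by by_cases hg : g ∈ H <;> simp [τ, hg]⟩
  obtain rfl | rfl : x = 1 ∨ x = Multiplicative.ofAdd 1 := by revert x; decide
  · exact ⟨1, map_one τ⟩
  · exact ⟨a, by simp [τ, ha]⟩

section QuadraticForm

variable {Q : QuadraticForm K V} {e f w : V}

theorem map_add_smul_of_map_eq_one (hQe : Q e = 1) (x : V) (a : K) :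
    Q (x + a • e) = Q x + a ^ 2 + a * polar Q x e := by
  rw [QuadraticMap.map_add Q, QuadraticMap.map_smul, hQe, polar_smul_right, smul_eq_mul,
    smul_eq_mul]
  ring

theorem exists_polar_eq_one (hnd : QNondeg Q) (he : e ≠ 0) : ∃ f, polar Q f e = 1 := by
  obtain ⟨f, hf⟩ : ∃ f, polar Q f e ≠ 0 := by
    by_contra! h
    exact he (hnd.1 e fun f => by simpa [polar_comm Q e f] using h f)
  exact ⟨(polar Q f e)⁻¹ • f, by rw [polar_smul_left, smul_eq_mul, inv_mul_cancel₀ hf]⟩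

variable [CharP K 2]

theorem polar_self_eq_zero_of_charTwo (x : V) : polar Q x x = 0 := by
  rw [polar_self, two_nsmul, CharTwo.add_self_eq_zero]

theorem exists_polar_eq_one_and_normalized (hnd : QNondeg Q) (hQe : Q e = 1) :
    ∃ f, polar Q f e = 1 ∧ (Q f = 0 ∨ ∀ a : K, a ^ 2 + a + Q f ≠ 0) := by
  have he : e ≠ 0 := by rintro rfl; simp at hQe
  obtain ⟨f, hf⟩ := exists_polar_eq_one hnd he
  by_cases h : ∃ a : K, a ^ 2 + a + Q f = 0
  · obtain ⟨a, ha⟩ := h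
    refine ⟨f + a • e, ?_, Or.inl ?_⟩
    · rw [polar_add_left, polar_smul_left, polar_self_eq_zero_of_charTwo, smul_zero, add_zero, hf]
    · rw [map_add_smul_of_map_eq_one hQe, hf]
      linear_combination ha
  · push Not at h
    exact ⟨f, hf, Or.inr h⟩

theorem linearIndependent_of_polar_eq_one (hQe : Q e = 1) (hf : polar Q f e = 1) :
    LinearIndependent K ![f, e] := by
  rw [linearIndependent_fin2]
  have he : e ≠ 0 := by rintro rfl; simp at hQe
  refine ⟨by simpa using he, fun a ha => ?_⟩
  simp only [Matrix.cons_val_one, Matrix.cons_val_zero] at ha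
  rw [← ha, polar_smul_left, polar_self_eq_zero_of_charTwo, smul_zero] at hf
  exact zero_ne_one hf

theorem span_range_eq_top_of_polar_eq_one (hdim : Module.finrank K V = 2) (hQe : Q e = 1)
    (hf : polar Q f e = 1) : Submodule.span K (Set.range ![f, e]) = ⊤ :=
  (linearIndependent_of_polar_eq_one hQe hf).span_eq_top_of_card_eq_finrank (by simp [hdim])

theorem eq_or_eq_add_of_polar_eq_one_of_map_eq (hdim : Module.finrank K V = 2) (hQe : Q e = 1)
    (hf : polar Q f e = 1) (hw : polar Q w e = 1) (hQ : Q w = Q f) : w = f ∨ w = f + e := by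
  have hw_mem : w ∈ Submodule.span K (Set.range ![f, e]) :=
    span_range_eq_top_of_polar_eq_one hdim hQe hf ▸ Submodule.mem_top
  obtain ⟨c, rfl⟩ := (Submodule.mem_span_range_iff_exists_fun K).1 hw_mem
  simp only [Fin.sum_univ_two, Matrix.cons_val_zero, Matrix.cons_val_one] at hw hQ ⊢
  have hc : c 0 = 1 := by
    rwa [polar_add_left, polar_smul_left, polar_smul_left, hf, polar_self_eq_zero_of_charTwo,
      smul_zero, add_zero, smul_eq_mul, mul_one] at hw
  rw [hc, one_smul, map_add_smul_of_map_eq_one hQe, hf, mul_one] at hQ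
  have hd : c 1 * (c 1 + 1) = 0 := by linear_combination hQ
  rcases mul_eq_zero.1 hd with hd | hd
  · simp [hc, hd]
  · simp [hc, CharTwo.add_eq_zero.1 hd]

end QuadraticForm

section Representation

variable {ρ : Representation K G V} {Q : QuadraticForm K V} {e f : V}

theorem GInvariantQF.polar_apply_apply (hinv : GInvariantQF ρ Q) (g : G) (x y : V) :
    polar Q (ρ g x) (ρ g y) = polar Q x y := by
  simp only [polar, ← map_add, hinv g]

variable [CharP K 2]

theorem act_eq_or_eq_add (hdim : Module.finrank K V = 2) (hinv : GInvariantQF ρ Q)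
    (hQe : Q e = 1) (hf : polar Q f e = 1) {g : G} (hge : ρ g e = e) :
    ρ g f = f ∨ ρ g f = f + e :=
  eq_or_eq_add_of_polar_eq_one_of_map_eq hdim hQe hf (by rw [← hge, hinv.polar_apply_apply, hf])
    (hinv g f)

theorem act_eq_one_iff (hdim : Module.finrank K V = 2) (hQe : Q e = 1) (hf : polar Q f e = 1)
    {g : G} (hge : ρ g e = e) : ρ g = 1 ↔ ρ g f = f := by
  refine ⟨fun h => by rw [h]; rfl, fun h => ?_⟩
  refine LinearMap.ext_on_range (span_range_eq_top_of_polar_eq_one hdim hQe hf) fun i => ?_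
  fin_cases i <;> simpa

theorem index_ker_eq_two (hdim : Module.finrank K V = 2) (hinv : GInvariantQF ρ Q)
    (hQe : Q e = 1) (hfix : ∀ g, ρ g e = e) (hf : polar Q f e = 1)
    (hntriv : ∃ g v, ρ g v ≠ v) : ρ.ker.index = 2 := by
  obtain ⟨g₀, v, hv⟩ := hntriv
  have hg₀ : ρ g₀ ≠ 1 := fun h => hv (by rw [h]; rfl)
  have hg₀f : ρ g₀ f = f + e := (act_eq_or_eq_add hdim hinv hQe hf (hfix g₀)).resolve_left
    (mt (act_eq_one_iff hdim hQe hf (hfix g₀)).2 hg₀)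
  rw [Subgroup.index_eq_two_iff_exists_notMem_and]
  refine ⟨g₀, hg₀, fun g => ?_⟩
  rw [MonoidHom.mem_ker, MonoidHom.mem_ker, act_eq_one_iff hdim hQe hf (hfix _),
    act_eq_one_iff hdim hQe hf (hfix _), map_mul, Module.End.mul_apply, hg₀f, map_add, hfix]
  rcases act_eq_or_eq_add hdim hinv hQe hf (hfix g) with h | h
  · exact Or.inr h
  · left
    rw [h, add_assoc, ← two_smul K e, CharTwo.two_eq_zero, zero_smul, add_zero]

end Representation

theorem stmt16_general (h2 : ringChar K = 2)
    (ρ : Representation K G V) (Q : QuadraticForm K V)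
    (hdim : Module.finrank K V = 2)
    (hinv : GInvariantQF ρ Q) (hnd : QNondeg Q)
    (e : V)
    (he : ∀ g, ρ g e = e) (hQe : Q e = 1)
    (hntriv : ∃ g v, ρ g v ≠ v) :
    ∃ b : Module.Basis (Fin 2) K V, b 1 = e ∧ polar Q (b 0) e = 1 ∧
      (Q (b 0) = 0 ∨ ∃ α : K, Q (b 0) = α ∧
        Irreducible (Polynomial.X ^ 2 + Polynomial.X + Polynomial.C α)) ∧
      (∀ g : G, (∀ v, ρ g v = v) ∨ (ρ g (b 0) = b 0 + e ∧ ρ g e = e)) ∧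
      ∃ τ : G →* Multiplicative (ZMod 2), Function.Surjective τ ∧
        ∀ g, τ g = 1 ↔ ∀ v, ρ g v = v := by
  have : CharP K 2 := ringChar.of_eq h2
  obtain ⟨f, hf, hQf⟩ := exists_polar_eq_one_and_normalized hnd hQe
  let b := basisOfLinearIndependentOfCardEqFinrank (linearIndependent_of_polar_eq_one hQe hf)
    (by simp [hdim])
  have hb0 : b 0 = f := by simp [b]
  have hb1 : b 1 = e := by simp [b]
  have hfixes (g : G) : (∀ v, ρ g v = v) ↔ ρ g f = f := by
    rw [← act_eq_one_iff hdim hQe hf (he g), LinearMap.ext_iff]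
    rfl
  obtain ⟨τ, hτ, hker⟩ := Subgroup.exists_surjective_monoidHom_zmod_two_of_index_eq_two
    (index_ker_eq_two hdim hinv hQe he hf hntriv)
  refine ⟨b, hb1, hb0 ▸ hf, hb0 ▸ hQf.imp_right fun h => ⟨Q f, rfl,
    Polynomial.irreducible_X_sq_add_X_add_C h⟩, fun g => ?_, τ, hτ, fun g => ?_⟩
  · rw [hfixes, hb0]
    exact (act_eq_or_eq_add hdim hinv hQe hf (he g)).imp_right fun h => ⟨h, he g⟩
  · rw [hker, MonoidHom.mem_ker, hfixes, act_eq_one_iff hdim hQe hf (he g)]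

/-- a 2-dimensional anisotropic equivariant quadratic module with socle
`⟨e⟩ ≅ T`, `Q e = 1` and non-trivial `G`-action has a basis `(f,e)` with
`B_Q(f,e) = 1`, `Q f ∈ {0, α}`, every `g ∈ G` acts trivially or by `f ↦ f + e`,
and the action factors through an epimorphism `τ : G → C₂`. -/
theorem stmt16 [Fintype K] (h2 : ringChar K = 2) [Finite G]
    (ρ : Representation K G V) (Q : QuadraticForm K V)
    (hdim : Module.finrank K V = 2)
    (hinv : GInvariantQF ρ Q) (hnd : QNondeg Q) (han : AnisotropicRep ρ Q)
    (e : V) (hsoc : socleRep ρ = Submodule.span K {e})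
    (he : ∀ g, ρ g e = e) (hQe : Q e = 1)
    (hntriv : ∃ g v, ρ g v ≠ v) :
    ∃ b : Module.Basis (Fin 2) K V, b 1 = e ∧ polar Q (b 0) e = 1 ∧
      (Q (b 0) = 0 ∨ ∃ α : K, Q (b 0) = α ∧
        Irreducible (Polynomial.X ^ 2 + Polynomial.X + Polynomial.C α)) ∧
      (∀ g : G, (∀ v, ρ g v = v) ∨ (ρ g (b 0) = b 0 + e ∧ ρ g e = e)) ∧
      ∃ τ : G →* Multiplicative (ZMod 2), Function.Surjective τ ∧
        ∀ g, τ g = 1 ↔ ∀ v, ρ g v = v :=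
  stmt16_general h2 ρ Q hdim hinv hnd e he hQe hntriv
end
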